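/- Fix admissible graphs Γ₁, Γ₂ and an insertion datum π (a way of redirecting the edges entering the first boundary vertex of Γ₁ onto vertices of Γ₂), with resulting graph Γ_π. Then the number of insertion data π' whose resulting graph Γ_{π'} is isomorphic to Γ_π equals |Aut(Γ₁)| · |Aut(Γ₂)| / |Aut(Γ_π, π)|, where Aut(Γ_π, π) is the group of automorphisms of Γ_π fixing the insertion datum π. -/

import Mathlib

/-- An admissible graph: finite directed acyclic graph, boundary vertices are sinks,
internal vertices have exactly two outgoing edges. -/
def IsAdm {V : Type} [Fintype V] [DecidableEq V]
    (edge : V → V → Bool) (bd : Finset V) : Prop :=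
  (∀ v : V, ¬ Relation.TransGen (fun a b => edge a b = true) v v) ∧
  (∀ v ∈ bd, ∀ w, edge v w = false) ∧
  (∀ v ∉ bd, (Finset.univ.filter (fun w => edge v w = true)).card = 2)

/-- The edge relation of the quotient graph `Γ/Θ`, obtained by collapsing the
vertex set `T` of the subgraph `Θ` to a single new boundary vertex `none`. -/
def qedge {V : Type} [Fintype V] [DecidableEq V] (edge : V → V → Bool) (T : Finset V) :
    Option {v : V // v ∉ T} → Option {v : V // v ∉ T} → Bool
  | some a, some b => edge a.1 b.1
  | some a, none => decide (∃ t ∈ T, edge a.1 t = true)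
  | none, _ => false

/-- The boundary of the quotient graph `Γ/Θ`: the surviving boundary vertices of `Γ`
together with the new boundary vertex `none`. -/
def qbd {V : Type} [Fintype V] [DecidableEq V] (bd T : Finset V) :
    Finset (Option {v : V // v ∉ T}) :=
  Finset.univ.filter (fun x => x = none ∨ ∃ a : {v : V // v ∉ T}, x = some a ∧ a.1 ∈ bd)

/-- The edge relation of the graph obtained by inserting the graph `Γ₂` (edges `e₂`) at
the boundary vertex `c1` of the graph `Γ₁` (edges `e₁`), redirecting each edge of `Γ₁`
entering `c1` according to the insertion datum `π`. -/
def edgeIns {V₁ V₂ : Type} [DecidableEq V₂]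
    (e₁ : V₁ → V₁ → Bool) (e₂ : V₂ → V₂ → Bool) (c1 : V₁)
    (π : {a : V₁ // e₁ a c1 = true} → V₂) :
    ({v : V₁ // v ≠ c1} ⊕ V₂) → ({v : V₁ // v ≠ c1} ⊕ V₂) → Bool
  | .inl a, .inl b => e₁ a.1 b.1
  | .inl a, .inr w => if h : e₁ a.1 c1 = true then decide (π ⟨a.1, h⟩ = w) else false
  | .inr w, .inr x => e₂ w x
  | .inr _, .inl _ => false

/-- The automorphism group of a graph with two ordered boundary vertices `x, y`:
edge-preserving permutations of the vertices fixing the boundary. -/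
def AutG {V : Type} (edge : V → V → Bool) (x y : V) : Type :=
  {φ : V ≃ V // (∀ a b, edge (φ a) (φ b) = edge a b) ∧ φ x = x ∧ φ y = y}

/-- Two insertion data `π, π'` for the pair `(Γ₁, Γ₂)` have the same type: the resulting
graphs `Γ_{π'}` and `Γ_π` are isomorphic (by an isomorphism respecting the three ordered
boundary vertices of the result). -/
def SameType {V₁ V₂ : Type} [DecidableEq V₂]
    (e₁ : V₁ → V₁ → Bool) (e₂ : V₂ → V₂ → Bool) (c1 c2 : V₁) (hc : c1 ≠ c2) (d1 d2 : V₂)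
    (π' π : {a : V₁ // e₁ a c1 = true} → V₂) : Prop :=
  ∃ φ : ({v : V₁ // v ≠ c1} ⊕ V₂) ≃ ({v : V₁ // v ≠ c1} ⊕ V₂),
    (∀ u v, edgeIns e₁ e₂ c1 π' (φ u) (φ v) = edgeIns e₁ e₂ c1 π u v) ∧
    φ (.inr d1) = .inr d1 ∧ φ (.inr d2) = .inr d2 ∧
    φ (.inl ⟨c2, Ne.symm hc⟩) = .inl ⟨c2, Ne.symm hc⟩

/-- The group `Aut(Γ_π, π)` of automorphisms of the resulting graph `Γ_π` which fix the
insertion datum `π`: they preserve the inserted copy of `Γ₂` and commute with `π`. -/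
def AutFix {V₁ V₂ : Type} [DecidableEq V₂]
    (e₁ : V₁ → V₁ → Bool) (e₂ : V₂ → V₂ → Bool) (c1 c2 : V₁) (hc : c1 ≠ c2) (d1 d2 : V₂)
    (π : {a : V₁ // e₁ a c1 = true} → V₂) : Type :=
  {φ : ({v : V₁ // v ≠ c1} ⊕ V₂) ≃ ({v : V₁ // v ≠ c1} ⊕ V₂) //
    (∀ u v, edgeIns e₁ e₂ c1 π (φ u) (φ v) = edgeIns e₁ e₂ c1 π u v) ∧
    φ (.inr d1) = .inr d1 ∧ φ (.inr d2) = .inr d2 ∧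
    φ (.inl ⟨c2, Ne.symm hc⟩) = .inl ⟨c2, Ne.symm hc⟩ ∧
    (∀ w : V₂, ∃ x : V₂, φ (.inr w) = .inr x) ∧
    (∀ (a b : {v : V₁ // v ≠ c1}) (ha : e₁ a.1 c1 = true) (hb : e₁ b.1 c1 = true),
      φ (.inl a) = .inl b → φ (.inr (π ⟨a.1, ha⟩)) = .inr (π ⟨b.1, hb⟩))}

/-!
The group `Aut(Γ₁) × Aut(Γ₂)` acts on insertion data by `(ρ₁, ρ₂) • π = ρ₂ ∘ π ∘ ρ₁⁻¹`, and the
theorem is the orbit–stabilizer theorem for this action. A pair `(ρ₁, ρ₂)` induces the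
isomorphism `ρ₁ ⊕ ρ₂ : Γ_π ≅ Γ_{(ρ₁, ρ₂) • π}`. Conversely every isomorphism `Γ_π ≅ Γ_{π'}`
fixing the boundary is of this form: the vertices coming from `Γ₁` are exactly those from which
`c2` is reachable (`Γ₁` is acyclic and an internal vertex has two successors, one of them not
`c1`), while no edge leads from `Γ₂` back to `Γ₁`. So the same-type class of `π` is its orbit,
and `Aut(Γ_π, π)` is its stabilizer.
-/

open Equiv Relation

lemma Equiv.Perm.exists_eq_sumCongr {α β : Type*} (φ : Perm (α ⊕ β))
    (hφ : ∀ u, (φ u).isLeft = u.isLeft) :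
    ∃ (ψ₁ : Perm α) (ψ₂ : Perm β), φ = sumCongr ψ₁ ψ₂ := by
  have hl : ∀ u, (φ u).isLeft ↔ u.isLeft := fun u => by rw [hφ]
  have hr : ∀ u, (φ u).isRight ↔ u.isRight := fun u => by
    rw [← Sum.not_isLeft, ← Sum.not_isLeft, hφ]
  refine ⟨sumIsLeft.permCongr (φ.subtypePerm hl), sumIsRight.permCongr (φ.subtypePerm hr), ?_⟩
  ext (a | b) <;> simp [permCongr_apply]

lemma Relation.reflTransGen_apply_iff {α : Type*} {r s : α → α → Prop} (φ : Perm α)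
    (hφ : ∀ a b, s (φ a) (φ b) ↔ r a b) {a b : α} :
    ReflTransGen s (φ a) (φ b) ↔ ReflTransGen r a b := by
  refine ⟨fun h => ?_, ReflTransGen.lift φ (fun x y => (hφ x y).2) a b⟩
  simpa [Function.onFun] using
    ReflTransGen.lift φ.symm (fun x y hxy => (hφ _ _).1 (by simpa using hxy)) _ _ h

namespace IsAdm

variable {V : Type} [Fintype V] [DecidableEq V] {e : V → V → Bool}

lemma wellFounded {bd : Finset V} (h : IsAdm e bd) : WellFounded (fun b a => e a b = true) := by
  let R : V → V → Prop := fun b a => TransGen (fun a b => e a b = true) a b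
  have : IsTrans V R := ⟨fun _ _ _ hab hbc => hbc.trans hab⟩
  have : Std.Irrefl R := ⟨h.1⟩
  exact Subrelation.wf (r := R) (fun h => TransGen.single h)
    (Finite.wellFounded_of_trans_of_irrefl R)

lemma exists_edge_ne {bd : Finset V} (h : IsAdm e bd) {v : V} (hv : v ∉ bd) (c : V) :
    ∃ w, e v w = true ∧ w ≠ c := by
  obtain ⟨w, hw, hwc⟩ := Finset.exists_mem_ne (by rw [h.2.2 v hv]; norm_num) c
  exact ⟨w, (Finset.mem_filter.1 hw).2, hwc⟩

lemma reflTransGen_ne {c1 c2 : V} (h : IsAdm e {c1, c2}) (hc : c1 ≠ c2) (v : {v // v ≠ c1}) :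
    ReflTransGen (fun a b : {v // v ≠ c1} => e a b = true) v ⟨c2, hc.symm⟩ := by
  obtain ⟨v, hv⟩ := v
  induction v using h.wellFounded.induction with
  | _ v ih =>
    by_cases hv2 : v = c2
    · subst hv2
      rfl
    · obtain ⟨w, hvw, hw⟩ := h.exists_edge_ne (v := v) (by simp [hv, hv2]) c1
      exact .head (show e v w = true from hvw) (ih w hvw hw)

end IsAdm

section BoundaryAut

variable {V : Type} {e : V → V → Bool} {x y : V}

def boundaryAut (e : V → V → Bool) (x y : V) : Subgroup (Perm V) where
  carrier := {φ | (∀ a b, e (φ a) (φ b) = e a b) ∧ φ x = x ∧ φ y = y}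
  one_mem' := ⟨fun _ _ => rfl, rfl, rfl⟩
  mul_mem' := by
    rintro φ ψ ⟨hφ, hφx, hφy⟩ ⟨hψ, hψx, hψy⟩
    exact ⟨fun a b => by simp [hφ, hψ], by simp [hψx, hφx], by simp [hψy, hφy]⟩
  inv_mem' := by
    rintro φ ⟨hφ, hφx, hφy⟩
    exact ⟨fun a b => by simpa using (hφ (φ⁻¹ a) (φ⁻¹ b)).symm,
      Perm.inv_eq_iff_eq.2 hφx.symm, Perm.inv_eq_iff_eq.2 hφy.symm⟩

lemma card_boundaryAut : Nat.card (boundaryAut e x y) = Nat.card (AutG e x y) := rfl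

lemma edge_apply_eq_of_mem_boundaryAut {ρ : Perm V} (hρ : ρ ∈ boundaryAut e x y) (a : V) :
    e (ρ a) x = e a x := by
  simpa [hρ.2.1] using hρ.1 a x

lemma ofSubtype_mem_boundaryAut [DecidableEq V] (hx : ∀ w, e x w = false) (hxy : y ≠ x)
    (ψ : Perm {v // v ≠ x}) (hψ : ∀ a b, e (ψ a) (ψ b) = e a b)
    (hψx : ∀ a, e (ψ a) x = e a x) (hψy : ψ ⟨y, hxy⟩ = ⟨y, hxy⟩) :
    Perm.ofSubtype ψ ∈ boundaryAut e x y := by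
  have hfix : Perm.ofSubtype ψ x = x := Perm.ofSubtype_apply_of_not_mem ψ (not_not.2 rfl)
  refine ⟨fun a b => ?_, hfix, by rw [Perm.ofSubtype_apply_of_mem ψ hxy, hψy]⟩
  by_cases ha : a = x
  · rw [ha, hfix, hx, hx]
  by_cases hb : b = x
  · rw [hb, hfix, Perm.ofSubtype_apply_of_mem ψ ha]
    exact hψx ⟨a, ha⟩
  · rw [Perm.ofSubtype_apply_of_mem ψ ha, Perm.ofSubtype_apply_of_mem ψ hb]
    exact hψ ⟨a, ha⟩ ⟨b, hb⟩

def inNbrPerm : boundaryAut e x y →* Perm {a // e a x = true} where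
  toFun ρ := ρ.1.subtypePerm fun a => by rw [edge_apply_eq_of_mem_boundaryAut ρ.2]
  map_one' := rfl
  map_mul' _ _ := rfl

end BoundaryAut

abbrev InsDatum {V₁ : Type} (e₁ : V₁ → V₁ → Bool) (c1 : V₁) (V₂ : Type) : Type :=
  {a : V₁ // e₁ a c1 = true} → V₂

section Insertion

variable {V₁ V₂ : Type} {e₁ : V₁ → V₁ → Bool} {c1 c2 : V₁} {e₂ : V₂ → V₂ → Bool} {d1 d2 : V₂}

variable (e₁ c1 c2 e₂ d1 d2) in
abbrev InsAut : Type := boundaryAut e₁ c1 c2 × boundaryAut e₂ d1 d2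

instance : MulAction (InsAut e₁ c1 c2 e₂ d1 d2) (InsDatum e₁ c1 V₂) where
  smul g π := g.2.1 ∘ π ∘ ⇑(inNbrPerm g.1)⁻¹
  one_smul _ := rfl
  mul_smul _ _ _ := rfl

lemma smul_inNbrPerm_apply (g : InsAut e₁ c1 c2 e₂ d1 d2) (π : InsDatum e₁ c1 V₂)
    (a : {a // e₁ a c1 = true}) : (g • π) (inNbrPerm g.1 a) = g.2.1 (π a) :=
  congrArg (g.2.1 ∘ π) ((inNbrPerm g.1).symm_apply_apply a)

def insPerm (g : InsAut e₁ c1 c2 e₂ d1 d2) : Perm ({v // v ≠ c1} ⊕ V₂) :=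
  sumCongr (g.1.1.subtypePerm fun _ => g.1.1.injective.ne_iff' g.1.2.2.1) g.2.1

@[simp] lemma insPerm_inl (g : InsAut e₁ c1 c2 e₂ d1 d2) (a : {v // v ≠ c1}) :
    (insPerm g (.inl a) : {v // v ≠ c1} ⊕ V₂) =
      .inl ⟨g.1.1 a, g.1.1.injective.ne_iff' g.1.2.2.1 |>.2 a.2⟩ := rfl

@[simp] lemma insPerm_inr (g : InsAut e₁ c1 c2 e₂ d1 d2) (w : V₂) :
    (insPerm g (.inr w) : {v // v ≠ c1} ⊕ V₂) = .inr (g.2.1 w) := rfl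

lemma insPerm_injective : Function.Injective (@insPerm V₁ V₂ e₁ c1 c2 e₂ d1 d2) := by
  intro g h hgh
  refine Prod.ext (Subtype.ext (Equiv.ext fun v => ?_)) (Subtype.ext (Equiv.ext fun w => ?_))
  · by_cases hv : v = c1
    · rw [hv, g.1.2.2.1, h.1.2.2.1]
    · simpa using
        congrArg Subtype.val (Sum.inl_injective (DFunLike.congr_fun hgh (.inl ⟨v, hv⟩)))
  · exact Sum.inr_injective (DFunLike.congr_fun hgh (.inr w))

variable [DecidableEq V₂]

lemma edgeIns_inl_inr_eq_true_iff (π : InsDatum e₁ c1 V₂) (a : {v // v ≠ c1}) (w : V₂) :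
    edgeIns e₁ e₂ c1 π (.inl a) (.inr w) = true ↔ ∃ h : e₁ a c1 = true, π ⟨a, h⟩ = w := by
  simp [edgeIns]

variable (e₂ d1 d2) in
def IsInsIso (hc : c1 ≠ c2) (π' π : InsDatum e₁ c1 V₂) (φ : Perm ({v // v ≠ c1} ⊕ V₂)) :
    Prop :=
  (∀ u v, edgeIns e₁ e₂ c1 π' (φ u) (φ v) = edgeIns e₁ e₂ c1 π u v) ∧
    φ (.inr d1) = .inr d1 ∧ φ (.inr d2) = .inr d2 ∧
    φ (.inl ⟨c2, hc.symm⟩) = .inl ⟨c2, hc.symm⟩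

lemma isInsIso_insPerm (hc : c1 ≠ c2) (g : InsAut e₁ c1 c2 e₂ d1 d2) (π : InsDatum e₁ c1 V₂) :
    IsInsIso e₂ d1 d2 hc (g • π) π (insPerm g) := by
  refine ⟨?_, by simp [g.2.2.2.1], by simp [g.2.2.2.2], by simp [g.1.2.2.2]⟩
  rintro (a | w) (b | x)
  · exact g.1.2.1 a b
  · rw [insPerm_inl, insPerm_inr, Bool.eq_iff_iff, edgeIns_inl_inr_eq_true_iff,
      edgeIns_inl_inr_eq_true_iff]
    have hin := edge_apply_eq_of_mem_boundaryAut g.1.2 a.1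
    constructor
    · rintro ⟨h, hx⟩
      have h' : e₁ a c1 = true := hin ▸ h
      exact ⟨h', g.2.1.injective ((smul_inNbrPerm_apply g π ⟨a, h'⟩).symm.trans hx)⟩
    · rintro ⟨h, rfl⟩
      exact ⟨hin.trans h, smul_inNbrPerm_apply g π ⟨a, h⟩⟩
  · rfl
  · exact g.2.2.1 w x

lemma isRight_of_reflTransGen_inr (π : InsDatum e₁ c1 V₂) {w : V₂}
    {u : {v // v ≠ c1} ⊕ V₂}
    (h : ReflTransGen (fun u v => edgeIns e₁ e₂ c1 π u v = true) (.inr w) u) : u.isRight := by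
  induction h with
  | refl => rfl
  | @tail x y _ hstep ih =>
    rcases x with _ | _ <;> rcases y with _ | _ <;> simp_all [edgeIns]

variable [Fintype V₁] [DecidableEq V₁]

variable (e₂) in
lemma isLeft_iff_reflTransGen (h₁ : IsAdm e₁ {c1, c2}) (hc : c1 ≠ c2) (π : InsDatum e₁ c1 V₂)
    (u : {v // v ≠ c1} ⊕ V₂) :
    u.isLeft ↔
      ReflTransGen (fun u v => edgeIns e₁ e₂ c1 π u v = true) u (.inl ⟨c2, hc.symm⟩) := by
  rcases u with a | w
  · simpa using ReflTransGen.lift Sum.inl (fun _ _ h => h) _ _ (h₁.reflTransGen_ne hc a)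
  · simpa using fun h => by simpa using isRight_of_reflTransGen_inr π h

lemma IsInsIso.isLeft_apply (h₁ : IsAdm e₁ {c1, c2}) {hc : c1 ≠ c2}
    {π' π : InsDatum e₁ c1 V₂} {φ : Perm ({v // v ≠ c1} ⊕ V₂)}
    (hφ : IsInsIso e₂ d1 d2 hc π' π φ) (u : {v // v ≠ c1} ⊕ V₂) :
    (φ u).isLeft = u.isLeft := by
  rw [Bool.eq_iff_iff, isLeft_iff_reflTransGen e₂ h₁ hc π', isLeft_iff_reflTransGen e₂ h₁ hc π]
  simpa only [hφ.2.2.2] using reflTransGen_apply_iff φ (b := .inl ⟨c2, hc.symm⟩)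
    fun a b => by rw [hφ.1]

lemma IsInsIso.exists_insPerm_eq (h₁ : IsAdm e₁ {c1, c2}) {hc : c1 ≠ c2}
    {π' π : InsDatum e₁ c1 V₂} {φ : Perm ({v // v ≠ c1} ⊕ V₂)}
    (hφ : IsInsIso e₂ d1 d2 hc π' π φ) :
    ∃ g : InsAut e₁ c1 c2 e₂ d1 d2, g • π = π' ∧ insPerm g = φ := by
  obtain ⟨ψ₁, ψ₂, rfl⟩ := φ.exists_eq_sumCongr (hφ.isLeft_apply h₁)
  obtain ⟨hedge, hd1, hd2, hc2⟩ := hφ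
  have hsink : ∀ w, e₁ c1 w = false := h₁.2.1 c1 (by simp)
  have hcross : ∀ a w, (∃ h, π' ⟨ψ₁ a, h⟩ = ψ₂ w) ↔ ∃ h, π ⟨a, h⟩ = w := fun a w => by
    rw [← edgeIns_inl_inr_eq_true_iff (e₂ := e₂), ← edgeIns_inl_inr_eq_true_iff (e₂ := e₂)]
    exact Bool.eq_iff_iff.1 (hedge (.inl a) (.inr w))
  have hin : ∀ a, e₁ (ψ₁ a) c1 = e₁ a c1 := fun a => Bool.eq_iff_iff.2
    ⟨fun h' => ((hcross a (ψ₂⁻¹ (π' ⟨ψ₁ a, h'⟩))).1 ⟨h', by simp⟩).1,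
      fun h => ((hcross a _).2 ⟨h, rfl⟩).1⟩
  have hρ₁ := ofSubtype_mem_boundaryAut hsink hc.symm ψ₁
    (fun a b => hedge (.inl a) (.inl b)) hin (Sum.inl_injective hc2)
  have hρ₂ : ψ₂ ∈ boundaryAut e₂ d1 d2 :=
    ⟨fun w x => hedge (.inr w) (.inr x), Sum.inr_injective hd1, Sum.inr_injective hd2⟩
  refine ⟨(⟨_, hρ₁⟩, ⟨ψ₂, hρ₂⟩), funext fun b => ?_, ?_⟩
  · obtain ⟨a, rfl⟩ := (inNbrPerm ⟨_, hρ₁⟩).surjective b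
    have ha : a.1 ≠ c1 := fun h => by simpa [h, hsink] using a.2
    rw [smul_inNbrPerm_apply]
    obtain ⟨h, hπ'⟩ := (hcross ⟨a, ha⟩ (π a)).2 ⟨a.2, rfl⟩
    have hb : inNbrPerm ⟨_, hρ₁⟩ a = ⟨ψ₁ ⟨a, ha⟩, h⟩ :=
      Subtype.ext (Perm.ofSubtype_apply_of_mem ψ₁ ha)
    rw [hb, hπ']
  · exact congrArg (sumCongr · ψ₂) (Perm.subtypePerm_ofSubtype ψ₁)

variable (e₂ d1 d2) in
lemma sameType_iff_mem_orbit (h₁ : IsAdm e₁ {c1, c2}) (hc : c1 ≠ c2)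
    (π π' : InsDatum e₁ c1 V₂) :
    SameType e₁ e₂ c1 c2 hc d1 d2 π' π ↔
      π' ∈ MulAction.orbit (InsAut e₁ c1 c2 e₂ d1 d2) π := by
  constructor
  · rintro ⟨φ, hφ⟩
    obtain ⟨g, hg, -⟩ := IsInsIso.exists_insPerm_eq (hc := hc) h₁ hφ
    exact ⟨g, hg⟩
  · rintro ⟨g, rfl⟩
    exact ⟨insPerm g, isInsIso_insPerm hc g π⟩

def stabilizerToAutFix (hc : c1 ≠ c2) (π : InsDatum e₁ c1 V₂)
    (g : MulAction.stabilizer (InsAut e₁ c1 c2 e₂ d1 d2) π) :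
    AutFix e₁ e₂ c1 c2 hc d1 d2 π := by
  refine ⟨insPerm g.1, ?_⟩
  obtain ⟨g, hg : g • π = π⟩ := g
  obtain ⟨hedge, hd1, hd2, hc2⟩ := hg ▸ isInsIso_insPerm hc g π
  refine ⟨hedge, hd1, hd2, hc2, fun w => ⟨_, rfl⟩, fun a b ha hb hab => ?_⟩
  have hab' : inNbrPerm g.1 ⟨a, ha⟩ = ⟨b, hb⟩ :=
    Subtype.ext (show g.1.1 a = b from
      congrArg Subtype.val (Sum.inl_injective ((insPerm_inl g a).symm.trans hab)))
  exact congrArg Sum.inr ((smul_inNbrPerm_apply g π _).symm.trans (by rw [hg, hab']))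

variable (e₂ d1 d2) in
lemma card_autFix (h₁ : IsAdm e₁ {c1, c2}) (hc : c1 ≠ c2) (π : InsDatum e₁ c1 V₂) :
    Nat.card (AutFix e₁ e₂ c1 c2 hc d1 d2 π) =
      Nat.card (MulAction.stabilizer (InsAut e₁ c1 c2 e₂ d1 d2) π) := by
  refine (Nat.card_congr (Equiv.ofBijective (stabilizerToAutFix hc π) ⟨?_, ?_⟩)).symm
  · exact fun g h hgh => Subtype.ext (insPerm_injective (congrArg Subtype.val hgh))
  · rintro ⟨φ, hedge, hd1, hd2, hc2, -⟩
    obtain ⟨g, hg, rfl⟩ :=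
      IsInsIso.exists_insPerm_eq (d1 := d1) (d2 := d2) (hc := hc) h₁ ⟨hedge, hd1, hd2, hc2⟩
    exact ⟨⟨g, hg⟩, rfl⟩

end Insertion

theorem stmt_7_general {V₁ V₂ : Type}
    [Fintype V₁] [DecidableEq V₁] [Fintype V₂] [DecidableEq V₂]
    (e₁ : V₁ → V₁ → Bool) (c1 c2 : V₁) (hc : c1 ≠ c2) (h₁ : IsAdm e₁ {c1, c2})
    (e₂ : V₂ → V₂ → Bool) (d1 d2 : V₂)
    (π : {a : V₁ // e₁ a c1 = true} → V₂) :
    Nat.card {π' : {a : V₁ // e₁ a c1 = true} → V₂ //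
        SameType e₁ e₂ c1 c2 hc d1 d2 π' π} =
      Nat.card (AutG e₁ c1 c2) * Nat.card (AutG e₂ d1 d2) /
        Nat.card (AutFix e₁ e₂ c1 c2 hc d1 d2 π) := by
  have h_orbit : Nat.card {π' // SameType e₁ e₂ c1 c2 hc d1 d2 π' π} =
      Nat.card (MulAction.orbit (InsAut e₁ c1 c2 e₂ d1 d2) π) :=
    Nat.card_congr (Equiv.subtypeEquivRight (sameType_iff_mem_orbit e₂ d1 d2 h₁ hc π))
  have h_orbit_stabilizer :=
    Nat.card_congr (MulAction.orbitProdStabilizerEquivGroup (InsAut e₁ c1 c2 e₂ d1 d2) π)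
  rw [Nat.card_prod, Nat.card_prod] at h_orbit_stabilizer
  rw [h_orbit, card_autFix e₂ d1 d2 h₁ hc π, ← card_boundaryAut, ← card_boundaryAut,
    ← h_orbit_stabilizer, Nat.mul_div_cancel _ Nat.card_pos]

/-- For admissible graphs `Γ₁` (boundary `c1,c2`) and `Γ₂` (boundary `d1,d2`)
and an insertion datum `π` at the first boundary vertex of `Γ₁`, the number of insertion
data `π'` whose resulting graph is isomorphic to `Γ_π` equals
`|Aut(Γ₁)| · |Aut(Γ₂)| / |Aut(Γ_π, π)|`. -/
theorem stmt_7 {V₁ V₂ : Type}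
    [Fintype V₁] [DecidableEq V₁] [Fintype V₂] [DecidableEq V₂]
    (e₁ : V₁ → V₁ → Bool) (c1 c2 : V₁) (hc : c1 ≠ c2) (h₁ : IsAdm e₁ {c1, c2})
    (e₂ : V₂ → V₂ → Bool) (d1 d2 : V₂) (hd : d1 ≠ d2) (h₂ : IsAdm e₂ {d1, d2})
    (π : {a : V₁ // e₁ a c1 = true} → V₂) :
    Nat.card {π' : {a : V₁ // e₁ a c1 = true} → V₂ //
        SameType e₁ e₂ c1 c2 hc d1 d2 π' π} =
      Nat.card (AutG e₁ c1 c2) * Nat.card (AutG e₂ d1 d2) /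
        Nat.card (AutFix e₁ e₂ c1 c2 hc d1 d2 π) :=
  stmt_7_general e₁ c1 c2 hc h₁ e₂ d1 d2 π
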